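/- arXiv:2109.09288 — 2 statements merged into one kernel-verified Lean document; each statement's English description precedes it below -/
import Mathlib

section
/- For every integer k ≥ 1 there exist a finite index set S ⊂ ℤ × ℕ with 2j − i = k for every (i,j) ∈ S, and real constants (a_{i,j})_{(i,j)∈S}, such that for all t > 0 and s > 0 the k-th partial derivative in t of g satisfies ∂^k g/∂t^k (t,s) = ( Σ_{(i,j)∈S} a_{i,j} t^{i} s^{−j} ) · g(t,s). -/
open MeasureTheory Set Filter
open scoped ENNReal NNReal

noncomputable section

/-- The density `g(t,s) = (t/(2√π)) e^{−t²/(4s)} s^{−3/2}` of the one-sided stable measure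
of order 1/2. -/
def gStable (t s : ℝ) : ℝ :=
  t / (2 * Real.sqrt Real.pi) * Real.exp (-(t ^ 2) / (4 * s)) * s ^ (-(3 : ℝ) / 2)

/-- The one-sided stable measure `μ_t^{(1/2)}` of order 1/2 on (0,∞). -/
def muStable (t : ℝ) : Measure ℝ :=
  (volume.withDensity fun s => ENNReal.ofReal (gStable t s)).restrict (Set.Ioi 0)

/-- The measure `dt/t` on (0,∞). -/
def muHaar : Measure ℝ :=
  (volume.withDensity fun t => ENNReal.ofReal t⁻¹).restrict (Set.Ioi 0)

/-- The Luxemburg norm with variable exponent `p(·)`, for `ℝ≥0∞`-valued functions. -/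
def luxNormE {X : Type*} [MeasurableSpace X] (ν : Measure X) (p : X → ℝ) (f : X → ℝ≥0∞) :
    ℝ≥0∞ :=
  sInf {l : ℝ≥0∞ | ∃ c : ℝ, 0 < c ∧ l = ENNReal.ofReal c ∧
    ∫⁻ x, (f x / ENNReal.ofReal c) ^ p x ∂ν ≤ 1}

/-- The Luxemburg norm with variable exponent `p(·)` of a real valued function. -/
def luxNorm {X : Type*} [MeasurableSpace X] (ν : Measure X) (p : X → ℝ) (f : X → ℝ) : ℝ≥0∞ :=
  luxNormE ν p fun x => ENNReal.ofReal |f x|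

/-- The Gaussian measure `γ_d` on ℝ^d. -/
def gaussMeasure (d : ℕ) : Measure (EuclideanSpace ℝ (Fin d)) :=
  volume.withDensity fun x => ENNReal.ofReal (Real.pi ^ (-(d : ℝ) / 2) * Real.exp (-‖x‖ ^ 2))

/-- The Ornstein-Uhlenbeck semigroup `T_t`. -/
def OU (d : ℕ) (t : ℝ) (f : EuclideanSpace ℝ (Fin d) → ℝ) (x : EuclideanSpace ℝ (Fin d)) : ℝ :=
  (1 - Real.exp (-2 * t)) ^ (-(d : ℝ) / 2) *
    ∫ y, Real.exp (-(Real.exp (-2 * t) * (‖x‖ ^ 2 + ‖y‖ ^ 2) -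
      2 * Real.exp (-t) * (inner ℝ x y : ℝ)) / (1 - Real.exp (-2 * t))) * f y ∂(gaussMeasure d)

/-- The maximal function `T*` of the Ornstein-Uhlenbeck semigroup. -/
def OUstar (d : ℕ) (f : EuclideanSpace ℝ (Fin d) → ℝ) (x : EuclideanSpace ℝ (Fin d)) : ℝ≥0∞ :=
  ⨆ t ∈ Set.Ioi (0 : ℝ), ENNReal.ofReal |OU d t f x|

/-- The Poisson-Hermite semigroup `P_t f(x) = ∫₀^∞ T_s f(x) μ_t^{(1/2)}(ds)`. -/
def PH (d : ℕ) (t : ℝ) (f : EuclideanSpace ℝ (Fin d) → ℝ) (x : EuclideanSpace ℝ (Fin d)) : ℝ :=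
  ∫ s in Set.Ioi (0 : ℝ), OU d s f x * gStable t s

/-- The k-th derivative in `t` of the Poisson-Hermite semigroup, `∂^k_t P_t f (x)`. -/
def dPH (d : ℕ) (k : ℕ) (f : EuclideanSpace ℝ (Fin d) → ℝ) (t : ℝ)
    (x : EuclideanSpace ℝ (Fin d)) : ℝ :=
  iteratedDeriv k (fun u => PH d u f x) t

/-- The class `𝒫^∞_{γ_d}(ℝ^d)` of Dalmasso-Scotto. -/
def memPGammaInf (d : ℕ) (p : EuclideanSpace ℝ (Fin d) → ℝ) : Prop :=
  ∃ C pinf : ℝ, 0 < C ∧ 1 ≤ pinf ∧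
    ∀ x : EuclideanSpace ℝ (Fin d), x ≠ 0 → |p x - pinf| ≤ C / ‖x‖ ^ 2

/-- The local log-Hölder class `LH₀(ℝ^d)`. -/
def memLH0 (d : ℕ) (p : EuclideanSpace ℝ (Fin d) → ℝ) : Prop :=
  ∃ C : ℝ, 0 < C ∧ ∀ x y : EuclideanSpace ℝ (Fin d), x ≠ y →
    |p x - p y| ≤ C / Real.log (Real.exp 1 + 1 / ‖x - y‖)

/-- A measurable exponent `p : ℝ^d → [1,∞)` with `1 < p₋ ≤ p₊ < ∞` (essential bounds w.r.t.
the Gaussian measure). -/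
def expOKGauss (d : ℕ) (p : EuclideanSpace ℝ (Fin d) → ℝ) : Prop :=
  Measurable p ∧ (∀ x, 1 ≤ p x) ∧
    ∃ m M : ℝ, 1 < m ∧ (∀ᵐ x ∂(gaussMeasure d), m ≤ p x) ∧ ∀ᵐ x ∂(gaussMeasure d), p x ≤ M

/-- `p(·) ∈ 𝒫^∞_{γ_d}(ℝ^d) ∩ LH₀(ℝ^d)` with `1 < p₋ ≤ p₊ < ∞`. -/
def goodP (d : ℕ) (p : EuclideanSpace ℝ (Fin d) → ℝ) : Prop :=
  memPGammaInf d p ∧ memLH0 d p ∧ expOKGauss d p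

/-- A measurable exponent `q : (0,∞) → [1,∞)` with `1 < q₋ ≤ q₊ < ∞` (essential bounds w.r.t.
the measure `dt/t`). -/
def expOKmu (q : ℝ → ℝ) : Prop :=
  Measurable q ∧ (∀ t : ℝ, 0 < t → 1 ≤ q t) ∧
    ∃ m M : ℝ, 1 < m ∧ (∀ᵐ t ∂muHaar, m ≤ q t) ∧ ∀ᵐ t ∂muHaar, q t ≤ M

/-- The class `𝒫_{0,∞}` of exponents on `(0,∞)`. -/
def memP0Inf (q : ℝ → ℝ) : Prop :=
  Measurable q ∧ (∀ t : ℝ, 0 < t → 1 ≤ q t) ∧ (∃ M : ℝ, ∀ᵐ t ∂muHaar, q t ≤ M) ∧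
    ∃ q0 qinf A : ℝ, 0 < A ∧
      Filter.Tendsto q (nhdsWithin 0 (Set.Ioi 0)) (nhds q0) ∧
      Filter.Tendsto q Filter.atTop (nhds qinf) ∧
      (∀ t : ℝ, 0 < t → t ≤ 1 / 2 → |q t - q0| ≤ A / Real.log (1 / t)) ∧
      (∀ t : ℝ, 2 < t → |q t - qinf| ≤ A / Real.log t)

/-- The Besov-Lipschitz seminorm `‖ t ↦ t^{k−α} ‖∂^k_t P_t f‖_{p(·),γ_d} ‖_{q(·),μ}`. -/
def besovSemi (d : ℕ) (p : EuclideanSpace ℝ (Fin d) → ℝ) (q : ℝ → ℝ) (α : ℝ) (k : ℕ)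
    (f : EuclideanSpace ℝ (Fin d) → ℝ) : ℝ≥0∞ :=
  luxNormE muHaar q fun t =>
    ENNReal.ofReal (t ^ ((k : ℝ) - α)) * luxNorm (gaussMeasure d) p (dPH d k f t)

/-- The Triebel-Lizorkin seminorm `‖ x ↦ ‖ t ↦ t^{k−α} |∂^k_t P_t f(x)| ‖_{q(·),μ} ‖_{p(·),γ_d}`. -/
def triebelSemi (d : ℕ) (p : EuclideanSpace ℝ (Fin d) → ℝ) (q : ℝ → ℝ) (α : ℝ) (k : ℕ)
    (f : EuclideanSpace ℝ (Fin d) → ℝ) : ℝ≥0∞ :=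
  luxNormE (gaussMeasure d) p fun x =>
    luxNorm muHaar q fun t => t ^ ((k : ℝ) - α) * dPH d k f t x

/-- The least constant `A_n(f)` with `‖∂^n_t P_t f‖_{p(·),γ_d} ≤ A t^{α−n}` for all `t > 0`. -/
def besovConst (d : ℕ) (p : EuclideanSpace ℝ (Fin d) → ℝ) (α : ℝ) (n : ℕ)
    (f : EuclideanSpace ℝ (Fin d) → ℝ) : ℝ≥0∞ :=
  sInf {A : ℝ≥0∞ | ∀ t : ℝ, 0 < t →
    luxNorm (gaussMeasure d) p (dPH d n f t) ≤ A * ENNReal.ofReal (t ^ (α - (n : ℝ)))}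

/-!
Since `∂ₜ g = (t⁻¹ - t / (2s)) g`, the derivative of `P g` is `(∂ₜ P + P (t⁻¹ - t / (2s))) g`,
and both operations raise by one the weight `2j - i` of each monomial `tⁱ s⁻ʲ`. By induction,
`∂ₜᵏ g = P g` with `P` in the span of the monomials of weight `k`.
-/

theorem hasDerivAt_gStable (s : ℝ) {t : ℝ} (ht : t ≠ 0) :
    HasDerivAt (fun u => gStable u s) ((t⁻¹ - t / (2 * s)) * gStable t s) t := by
  have hlin : HasDerivAt (fun u : ℝ => u / (2 * Real.sqrt Real.pi))
      (1 / (2 * Real.sqrt Real.pi)) t := by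
    simpa using (hasDerivAt_id t).div_const (2 * Real.sqrt Real.pi)
  have hexp : HasDerivAt (fun u : ℝ => Real.exp (-(u ^ 2) / (4 * s)))
      (Real.exp (-(t ^ 2) / (4 * s)) * (-(2 * t) / (4 * s))) t := by
    simpa using ((hasDerivAt_pow 2 t).neg.div_const (4 * s)).exp
  refine ((hlin.mul hexp).mul_const (s ^ (-(3 : ℝ) / 2))).congr_deriv ?_
  unfold gStable
  field_simp
  ring

def laurentMonomial (ij : ℤ × ℕ) (t s : ℝ) : ℝ :=
  t ^ ij.1 * s ^ (-(ij.2 : ℤ))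

def weightedLaurent (k : ℤ) : Submodule ℝ (ℝ → ℝ → ℝ) :=
  Submodule.span ℝ (laurentMonomial '' {ij | 2 * (ij.2 : ℤ) - ij.1 = k})

theorem laurentMonomial_mem_weightedLaurent (ij : ℤ × ℕ) :
    laurentMonomial ij ∈ weightedLaurent (2 * (ij.2 : ℤ) - ij.1) :=
  Submodule.subset_span ⟨ij, rfl, rfl⟩

theorem exists_finset_sum_of_mem_weightedLaurent {k : ℤ} {P : ℝ → ℝ → ℝ}
    (hP : P ∈ weightedLaurent k) :
    ∃ (S : Finset (ℤ × ℕ)) (a : ℤ × ℕ → ℝ), (∀ ij ∈ S, 2 * (ij.2 : ℤ) - ij.1 = k) ∧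
      ∀ t s, P t s = ∑ ij ∈ S, a ij * t ^ ij.1 * s ^ (-(ij.2 : ℤ)) := by
  obtain ⟨l, hl, rfl⟩ := (Finsupp.mem_span_image_iff_linearCombination ℝ).mp hP
  refine ⟨l.support, l, fun ij hij => hl hij, fun t s => ?_⟩
  simp only [Finsupp.linearCombination_apply, Finsupp.sum, Finset.sum_apply, Pi.smul_apply,
    smul_eq_mul, laurentMonomial, mul_assoc]

theorem hasDerivAt_laurentMonomial_mul_gStable (ij : ℤ × ℕ) (s : ℝ) {t : ℝ} (ht : t ≠ 0) :
    HasDerivAt (fun u => laurentMonomial ij u s * gStable u s)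
      (((ij.1 + 1 : ℝ) • laurentMonomial (ij.1 - 1, ij.2) -
        (1 / 2 : ℝ) • laurentMonomial (ij.1 + 1, ij.2 + 1)) t s * gStable t s) t := by
  have hmono : HasDerivAt (fun u => laurentMonomial ij u s)
      ((ij.1 : ℝ) * t ^ (ij.1 - 1) * s ^ (-(ij.2 : ℤ))) t :=
    (hasDerivAt_zpow ij.1 t (Or.inl ht)).mul_const _
  refine (hmono.mul (hasDerivAt_gStable s ht)).congr_deriv ?_
  simp only [laurentMonomial, Pi.sub_apply, Pi.smul_apply, smul_eq_mul, zpow_sub_one₀ ht,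
    zpow_add_one₀ ht, zpow_neg, zpow_natCast, pow_succ, mul_inv]
  field_simp
  ring

theorem exists_hasDerivAt_mul_gStable {k : ℤ} {P : ℝ → ℝ → ℝ} (hP : P ∈ weightedLaurent k) :
    ∃ Q ∈ weightedLaurent (k + 1), ∀ s t, t ≠ 0 →
      HasDerivAt (fun u => P u s * gStable u s) (Q t s * gStable t s) t := by
  induction hP using Submodule.span_induction with
  | mem _ hm =>
    obtain ⟨ij, rfl, rfl⟩ := hm
    refine ⟨_, Submodule.sub_mem _ (Submodule.smul_mem _ _ ?_) (Submodule.smul_mem _ _ ?_),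
      fun s t ht => hasDerivAt_laurentMonomial_mul_gStable ij s ht⟩
    · convert laurentMonomial_mem_weightedLaurent (ij.1 - 1, ij.2) using 2; ring
    · convert laurentMonomial_mem_weightedLaurent (ij.1 + 1, ij.2 + 1) using 2; push_cast; ring
  | zero => exact ⟨0, Submodule.zero_mem _, fun s t _ => by simpa using hasDerivAt_const t 0⟩
  | add P₁ P₂ _ _ h₁ h₂ =>
    obtain ⟨Q₁, hQ₁, hd₁⟩ := h₁
    obtain ⟨Q₂, hQ₂, hd₂⟩ := h₂
    refine ⟨Q₁ + Q₂, Submodule.add_mem _ hQ₁ hQ₂, fun s t ht => ?_⟩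
    simpa only [Pi.add_apply, add_mul] using (hd₁ s t ht).fun_add (hd₂ s t ht)
  | smul c P _ h =>
    obtain ⟨Q, hQ, hd⟩ := h
    refine ⟨c • Q, Submodule.smul_mem _ c hQ, fun s t ht => ?_⟩
    simpa only [Pi.smul_apply, smul_eq_mul, mul_assoc] using (hd s t ht).const_mul c

theorem exists_iteratedDeriv_gStable_eq (k : ℕ) :
    ∃ P ∈ weightedLaurent k, ∀ s t, t ≠ 0 →
      iteratedDeriv k (fun u => gStable u s) t = P t s * gStable t s := by
  induction k with
  | zero =>
    refine ⟨laurentMonomial (0, 0), laurentMonomial_mem_weightedLaurent (0, 0), fun s t _ => ?_⟩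
    simp [laurentMonomial]
  | succ k ih =>
    obtain ⟨P, hP, hPk⟩ := ih
    obtain ⟨Q, hQ, hd⟩ := exists_hasDerivAt_mul_gStable hP
    refine ⟨Q, by exact_mod_cast hQ, fun s t ht => ?_⟩
    have hPk_near : iteratedDeriv k (fun u => gStable u s) =ᶠ[nhds t]
        fun u => P u s * gStable u s :=
      eventually_of_mem (isOpen_ne.mem_nhds ht) fun u hu => hPk s u hu
    rw [iteratedDeriv_succ, hPk_near.deriv_eq, (hd s t ht).deriv]

theorem stmt_0_general (k : ℕ) :
    ∃ (S : Finset (ℤ × ℕ)) (a : ℤ × ℕ → ℝ),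
      (∀ ij ∈ S, 2 * (ij.2 : ℤ) - ij.1 = (k : ℤ)) ∧
      ∀ t s : ℝ, 0 < t → 0 < s →
        iteratedDeriv k (fun u => gStable u s) t =
          (∑ ij ∈ S, a ij * t ^ ij.1 * s ^ (-(ij.2 : ℤ))) * gStable t s := by
  obtain ⟨P, hP, hPk⟩ := exists_iteratedDeriv_gStable_eq k
  obtain ⟨S, a, hS, hPS⟩ := exists_finset_sum_of_mem_weightedLaurent hP
  exact ⟨S, a, hS, fun t s ht _ => by rw [hPk s t ht.ne', hPS]⟩

/-- For every `k ≥ 1` there is a finite set `S ⊆ ℤ × ℕ` with `2j − i = k`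
for all `(i,j) ∈ S`, and constants `a_{i,j}`, such that
`∂^k g/∂t^k (t,s) = (Σ_{(i,j)∈S} a_{i,j} t^i s^{−j}) g(t,s)` for all `t, s > 0`. -/
theorem stmt_0 (k : ℕ) (hk : 1 ≤ k) :
    ∃ (S : Finset (ℤ × ℕ)) (a : ℤ × ℕ → ℝ),
      (∀ ij ∈ S, 2 * (ij.2 : ℤ) - ij.1 = (k : ℤ)) ∧
      ∀ t s : ℝ, 0 < t → 0 < s →
        iteratedDeriv k (fun u => gStable u s) t =
          (∑ ij ∈ S, a ij * t ^ ij.1 * s ^ (-(ij.2 : ℤ))) * gStable t s :=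
  stmt_0_general k
end
end

section
/- For every integer k ≥ 1 there exists a constant C_k > 0 such that for every f ∈ L¹(γ_d), every x ∈ ℝ^d and every t > 0, |∂^k/∂t^k P_t f(x)| ≤ C_k · T* f(x) · t^{−k}. -/
open MeasureTheory Set Filter
open scoped ENNReal NNReal

noncomputable section

/-!
Let `g(t, s)` be the density `gStable` of `μ_t^{(1/2)}`. When `T* f(x) < ∞` the function
`s ↦ T_s f(x)` is bounded, so one may differentiate under the integral sign:
`∂ₜᵏ P_t f(x) = ∫₀^∞ T_s f(x) ∂ₜᵏ g(t, s) ds`. Every `t`-derivative of `g` is a finite combination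
of monomials `t^a s^(-3/2-m) e^(-t²/4s)`, and those occurring in `∂ₜᵏ g` satisfy `a + k = 2m + 1`,
so that `∂ₜᵏ g(t, t²u) = t^(-k-2) ∂ₜᵏ g(1, u)`. The substitution `s = t²u` then gives
`∫₀^∞ |∂ₜᵏ g(t, s)| ds = t^(-k) ∫₀^∞ |∂ₜᵏ g(1, u)| du`, and `|T_s f(x)| ≤ T* f(x)` finishes the
proof.
-/

namespace PoissonHermite

open Real

lemma integrableOn_rpow_mul_exp_neg_div {q b : ℝ} (hq : q < -1) (hb : 0 < b) :
    IntegrableOn (fun s : ℝ => s ^ q * exp (-b / s)) (Ioi 0) := by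
  have hGamma : IntegrableOn (fun u : ℝ => u ^ (-2 - q) * exp (-b * u ^ (1 : ℝ))) (Ioi 0) :=
    integrableOn_rpow_mul_exp_neg_mul_rpow (by linarith) one_pos hb
  -- substitute `u = s⁻¹`, turning this into a Gamma-type integral
  refine ((integrableOn_Ioi_comp_rpow_iff' _ (p := -1) (by norm_num)).2 hGamma).congr_fun
    (fun s hs => ?_) measurableSet_Ioi
  have hs : 0 < s := hs
  simp only [smul_eq_mul, rpow_one, rpow_neg_one]
  rw [← mul_assoc, inv_rpow hs.le, ← rpow_neg hs.le, ← rpow_add hs, div_eq_mul_inv]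
  norm_num

def stableMonomial (a m : ℕ) (t s : ℝ) : ℝ :=
  t ^ a * s ^ (-(3 : ℝ) / 2 - m) * exp (-(t ^ 2) / (4 * s))

variable {a m : ℕ} {t s : ℝ}

lemma stableMonomial_nonneg (ht : 0 ≤ t) (hs : 0 < s) : 0 ≤ stableMonomial a m t s := by
  have := rpow_nonneg hs.le (-(3 : ℝ) / 2 - m)
  unfold stableMonomial
  positivity

lemma measurable_stableMonomial (a m : ℕ) (t : ℝ) : Measurable (stableMonomial a m t) := by
  unfold stableMonomial
  fun_prop

lemma integrableOn_stableMonomial (a m : ℕ) (ht : 0 < t) :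
    IntegrableOn (stableMonomial a m t) (Ioi 0) := by
  have hq : -(3 : ℝ) / 2 - m < -1 := by linarith [(Nat.cast_nonneg m : (0 : ℝ) ≤ m)]
  refine IntegrableOn.congr_fun ((integrableOn_rpow_mul_exp_neg_div hq
    (by positivity : 0 < t ^ 2 / 4)).const_mul (t ^ a)) (fun s _ => ?_) measurableSet_Ioi
  simp only [stableMonomial, neg_div, div_div, mul_assoc]

lemma hasDerivAt_stableMonomial (a m : ℕ) (hs : 0 < s) (t : ℝ) :
    HasDerivAt (fun t => stableMonomial a m t s)
      (a * stableMonomial (a - 1) m t s - stableMonomial (a + 1) (m + 1) t s / 2) t := by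
  have hpow : HasDerivAt (fun t : ℝ => t ^ a * s ^ (-(3 : ℝ) / 2 - m))
      (a * t ^ (a - 1) * s ^ (-(3 : ℝ) / 2 - m)) t := (hasDerivAt_pow a t).mul_const _
  have hexp : HasDerivAt (fun t : ℝ => exp (-(t ^ 2) / (4 * s)))
      (exp (-(t ^ 2) / (4 * s)) * (-((2 : ℕ) * t ^ 1) / (4 * s))) t :=
    (((hasDerivAt_pow 2 t).neg).div_const (4 * s)).exp
  refine (hpow.mul hexp).congr_deriv ?_
  have hrpow : s ^ (-(3 : ℝ) / 2 - (m + 1 : ℕ)) = s ^ (-(3 : ℝ) / 2 - m) / s := by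
    rw [Nat.cast_succ, ← sub_sub, rpow_sub hs, rpow_one]
  simp only [stableMonomial, hrpow]
  field_simp
  ring

lemma stableMonomial_le_three_pow_mul {c : ℝ} (hc : 0 < c) (hct : c ≤ t) (htc : t ≤ 3 * c)
    (hs : 0 < s) : stableMonomial a m t s ≤ 3 ^ a * stableMonomial a m c s := by
  have hrpow := rpow_nonneg hs.le (-(3 : ℝ) / 2 - m)
  have ht : 0 ≤ t := hc.le.trans hct
  have hexp : exp (-(t ^ 2) / (4 * s)) ≤ exp (-(c ^ 2) / (4 * s)) :=
    exp_le_exp.2 (div_le_div_of_nonneg_right (by nlinarith) (by positivity))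
  calc stableMonomial a m t s
      ≤ (3 * c) ^ a * s ^ (-(3 : ℝ) / 2 - m) * exp (-(c ^ 2) / (4 * s)) := by
        unfold stableMonomial
        gcongr
    _ = 3 ^ a * stableMonomial a m c s := by rw [stableMonomial, mul_pow]; ring

lemma stableMonomial_sq_mul (k : ℕ) (hdeg : a + k = 2 * m + 1) (ht : 0 < t) {u : ℝ}
    (hu : 0 < u) :
    stableMonomial a m t (t ^ 2 * u) = (t ^ (k + 2))⁻¹ * stableMonomial a m 1 u := by
  have hpow : t ^ a * (t ^ 2) ^ (-(3 : ℝ) / 2 - m) = (t ^ (k + 2))⁻¹ := by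
    rw [← rpow_natCast t 2, ← rpow_mul ht.le, ← rpow_natCast t a, ← rpow_add ht,
      ← rpow_natCast t (k + 2), ← rpow_neg ht.le]
    congr 1
    have : (a : ℝ) + k = 2 * m + 1 := by exact_mod_cast hdeg
    push_cast
    linarith
  have hexp : -(t ^ 2) / (4 * (t ^ 2 * u)) = -((1 : ℝ) ^ 2) / (4 * u) := by
    field_simp
  simp only [stableMonomial, mul_rpow (by positivity : (0 : ℝ) ≤ t ^ 2) hu.le, hexp]
  rw [← hpow]
  ring

structure StableTerm where
  coeff : ℝ
  tDeg : ℕ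
  sDeg : ℕ

def evalTerms (L : List StableTerm) (t s : ℝ) : ℝ :=
  (L.map fun p => p.coeff * stableMonomial p.tDeg p.sDeg t s).sum

def derivTerms (L : List StableTerm) : List StableTerm :=
  L.flatMap fun p =>
    [⟨p.tDeg * p.coeff, p.tDeg - 1, p.sDeg⟩, ⟨-p.coeff / 2, p.tDeg + 1, p.sDeg + 1⟩]

def majorantTerms (L : List StableTerm) : List StableTerm :=
  L.map fun p => ⟨|p.coeff| * 3 ^ p.tDeg, p.tDeg, p.sDeg⟩

-- Every monomial of `evalTerms L` is homogeneous of degree `-k` under `(t, s) ↦ (λ t, λ² s)`.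
def IsHomogeneous (k : ℕ) (L : List StableTerm) : Prop :=
  ∀ p ∈ L, p.coeff = 0 ∨ p.tDeg + k = 2 * p.sDeg + 1

@[simp] lemma evalTerms_nil (t s : ℝ) : evalTerms [] t s = 0 := rfl

@[simp] lemma evalTerms_cons (p : StableTerm) (L : List StableTerm) (t s : ℝ) :
    evalTerms (p :: L) t s = p.coeff * stableMonomial p.tDeg p.sDeg t s + evalTerms L t s :=
  List.sum_cons

@[simp] lemma derivTerms_cons (p : StableTerm) (L : List StableTerm) :
    derivTerms (p :: L) = ⟨p.tDeg * p.coeff, p.tDeg - 1, p.sDeg⟩ ::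
      ⟨-p.coeff / 2, p.tDeg + 1, p.sDeg + 1⟩ :: derivTerms L := rfl

@[simp] lemma majorantTerms_cons (p : StableTerm) (L : List StableTerm) :
    majorantTerms (p :: L) = ⟨|p.coeff| * 3 ^ p.tDeg, p.tDeg, p.sDeg⟩ :: majorantTerms L := rfl

lemma hasDerivAt_evalTerms (L : List StableTerm) (hs : 0 < s) (t : ℝ) :
    HasDerivAt (fun t => evalTerms L t s) (evalTerms (derivTerms L) t s) t := by
  induction L with
  | nil => exact hasDerivAt_const t 0
  | cons p L ih =>
    simp only [evalTerms_cons, derivTerms_cons]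
    refine (((hasDerivAt_stableMonomial p.tDeg p.sDeg hs t).const_mul p.coeff).add
      ih).congr_deriv ?_
    ring

lemma measurable_evalTerms (L : List StableTerm) (t : ℝ) : Measurable (evalTerms L t) := by
  induction L with
  | nil => exact measurable_const
  | cons p L ih => exact ((measurable_stableMonomial _ _ t).const_mul _).add ih

lemma integrableOn_evalTerms (L : List StableTerm) (ht : 0 < t) :
    IntegrableOn (evalTerms L t) (Ioi 0) := by
  induction L with
  | nil => exact integrableOn_zero
  | cons p L ih => exact ((integrableOn_stableMonomial _ _ ht).const_mul _).add ih

lemma abs_evalTerms_le_majorantTerms (L : List StableTerm) {c : ℝ} (hc : 0 < c) (hct : c ≤ t)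
    (htc : t ≤ 3 * c) (hs : 0 < s) : |evalTerms L t s| ≤ evalTerms (majorantTerms L) c s := by
  induction L with
  | nil => simp [majorantTerms]
  | cons p L ih =>
    have hmono := stableMonomial_le_three_pow_mul (a := p.tDeg) (m := p.sDeg) hc hct htc hs
    have hnonneg := stableMonomial_nonneg (a := p.tDeg) (m := p.sDeg) (hc.le.trans hct) hs
    simp only [evalTerms_cons, majorantTerms_cons]
    calc |p.coeff * stableMonomial p.tDeg p.sDeg t s + evalTerms L t s|
        ≤ |p.coeff| * stableMonomial p.tDeg p.sDeg t s + |evalTerms L t s| :=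
          (abs_add_le _ _).trans_eq (by rw [abs_mul, abs_of_nonneg hnonneg])
      _ ≤ |p.coeff| * (3 ^ p.tDeg * stableMonomial p.tDeg p.sDeg c s)
          + evalTerms (majorantTerms L) c s := by gcongr
      _ = _ := by ring

lemma IsHomogeneous.derivTerms {k : ℕ} {L : List StableTerm} (hL : IsHomogeneous k L) :
    IsHomogeneous (k + 1) (derivTerms L) := by
  intro q hq
  obtain ⟨p, hp, hq⟩ := List.mem_flatMap.1 hq
  rcases hL p hp with hzero | hdeg
  · left
    rcases List.mem_pair.1 hq with rfl | rfl <;> simp [hzero]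
  · rcases List.mem_pair.1 hq with rfl | rfl
    · rcases Nat.eq_zero_or_pos p.tDeg with h0 | hpos
      · exact .inl (by simp [h0])
      · exact .inr (by dsimp only; omega)
    · exact .inr (by dsimp only; omega)

lemma evalTerms_sq_mul {k : ℕ} {L : List StableTerm} (hL : IsHomogeneous k L) (ht : 0 < t)
    {u : ℝ} (hu : 0 < u) : evalTerms L t (t ^ 2 * u) = (t ^ (k + 2))⁻¹ * evalTerms L 1 u := by
  induction L with
  | nil => simp
  | cons p L ih =>
    simp only [evalTerms_cons]
    rw [ih fun q hq => hL q (List.mem_cons_of_mem p hq), mul_add]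
    rcases hL p List.mem_cons_self with hzero | hdeg
    · simp [hzero]
    · rw [stableMonomial_sq_mul k hdeg ht hu]
      ring

lemma integral_abs_evalTerms {k : ℕ} {L : List StableTerm} (hL : IsHomogeneous k L)
    (ht : 0 < t) :
    ∫ s in Ioi 0, |evalTerms L t s| = (t ^ k)⁻¹ * ∫ u in Ioi 0, |evalTerms L 1 u| := by
  have ht2 : 0 < t ^ 2 := by positivity
  have hsubst := integral_comp_mul_left_Ioi (fun s => |evalTerms L t s|) 0 ht2
  rw [mul_zero, smul_eq_mul, eq_inv_mul_iff_mul_eq₀ ht2.ne'] at hsubst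
  rw [← hsubst, setIntegral_congr_fun measurableSet_Ioi fun u hu =>
    congrArg abs (evalTerms_sq_mul hL ht hu)]
  simp only [abs_mul, abs_inv, abs_of_pos (pow_pos ht _), integral_const_mul]
  field_simp
  ring

section BoundedWeight

variable {F : ℝ → ℝ} {M : ℝ} (hM : ∀ s ∈ Ioi (0 : ℝ), |F s| ≤ M)
include hM

lemma abs_integral_mul_evalTerms_le {k : ℕ} {L : List StableTerm} (hL : IsHomogeneous k L)
    (ht : 0 < t) :
    |∫ s in Ioi 0, F s * evalTerms L t s| ≤ M * (∫ u in Ioi 0, |evalTerms L 1 u|) * (t ^ k)⁻¹ := by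
  calc |∫ s in Ioi 0, F s * evalTerms L t s|
      ≤ ∫ s in Ioi 0, M * |evalTerms L t s| := by
        rw [← Real.norm_eq_abs]
        refine norm_integral_le_of_norm_le ((integrableOn_evalTerms L ht).abs.const_mul M) ?_
        filter_upwards [ae_restrict_mem measurableSet_Ioi] with s hs
        rw [Real.norm_eq_abs, abs_mul]
        exact mul_le_mul_of_nonneg_right (hM s hs) (abs_nonneg _)
    _ = M * (∫ u in Ioi 0, |evalTerms L 1 u|) * (t ^ k)⁻¹ := by
        rw [integral_const_mul, integral_abs_evalTerms hL ht]
        ring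

variable (hF : AEStronglyMeasurable F (volume.restrict (Ioi 0)))
include hF

lemma integrable_mul_evalTerms (L : List StableTerm) (ht : 0 < t) :
    Integrable (fun s => F s * evalTerms L t s) (volume.restrict (Ioi 0)) := by
  refine Integrable.mono' ((integrableOn_evalTerms L ht).abs.const_mul M)
    (hF.mul (measurable_evalTerms L t).aestronglyMeasurable) ?_
  filter_upwards [ae_restrict_mem measurableSet_Ioi] with s hs
  rw [Real.norm_eq_abs, abs_mul]
  exact mul_le_mul_of_nonneg_right (hM s hs) (abs_nonneg _)

lemma hasDerivAt_integral_mul_evalTerms (L : List StableTerm) {t₀ : ℝ} (ht₀ : 0 < t₀) :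
    HasDerivAt (fun t => ∫ s in Ioi 0, F s * evalTerms L t s)
      (∫ s in Ioi 0, F s * evalTerms (derivTerms L) t₀ s) t₀ := by
  have hM0 : 0 ≤ M := (abs_nonneg _).trans (hM 1 (mem_Ioi.2 one_pos))
  have hr : 0 < t₀ / 2 := half_pos ht₀
  refine (hasDerivAt_integral_of_dominated_loc_of_deriv_le (Metric.ball_mem_nhds t₀ hr)
    (F := fun t s => F s * evalTerms L t s) (F' := fun t s => F s * evalTerms (derivTerms L) t s)
    (bound := fun s => M * evalTerms (majorantTerms (derivTerms L)) (t₀ / 2) s)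
    (Eventually.of_forall fun t => hF.mul (measurable_evalTerms L t).aestronglyMeasurable)
    (integrable_mul_evalTerms hM hF L ht₀)
    (hF.mul (measurable_evalTerms _ t₀).aestronglyMeasurable) ?_
    ((integrableOn_evalTerms _ hr).const_mul M) ?_).2
  · filter_upwards [ae_restrict_mem measurableSet_Ioi] with s hs t ht
    rw [Metric.mem_ball, Real.dist_eq, abs_sub_lt_iff] at ht
    rw [Real.norm_eq_abs, abs_mul]
    exact mul_le_mul (hM s hs)
      (abs_evalTerms_le_majorantTerms _ hr (by linarith) (by linarith) hs) (abs_nonneg _) hM0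
  · filter_upwards [ae_restrict_mem measurableSet_Ioi] with s hs t _
    exact (hasDerivAt_evalTerms L hs t).const_mul (F s)

lemma iteratedDeriv_integral_mul_evalTerms (L : List StableTerm) (k : ℕ) (ht : 0 < t) :
    iteratedDeriv k (fun t => ∫ s in Ioi 0, F s * evalTerms L t s) t
      = ∫ s in Ioi 0, F s * evalTerms (derivTerms^[k] L) t s := by
  induction k generalizing t with
  | zero => rfl
  | succ k ih =>
    have hloc : iteratedDeriv k (fun t => ∫ s in Ioi 0, F s * evalTerms L t s)
        =ᶠ[nhds t] fun t => ∫ s in Ioi 0, F s * evalTerms (derivTerms^[k] L) t s :=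
      eventually_of_mem (isOpen_Ioi.mem_nhds ht) fun _ hu => ih hu
    rw [iteratedDeriv_succ, hloc.deriv_eq,
      (hasDerivAt_integral_mul_evalTerms hM hF _ ht).deriv, Function.iterate_succ_apply']

end BoundedWeight

def stableDensityTerms : List StableTerm := [⟨(2 * sqrt π)⁻¹, 1, 0⟩]

lemma gStable_eq_evalTerms (t s : ℝ) : gStable t s = evalTerms stableDensityTerms t s := by
  simp only [gStable, stableDensityTerms, evalTerms_cons, evalTerms_nil, stableMonomial]
  norm_num
  ring

lemma isHomogeneous_iterate_derivTerms_stableDensityTerms (k : ℕ) :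
    IsHomogeneous k (derivTerms^[k] stableDensityTerms) := by
  induction k with
  | zero => simp [IsHomogeneous, stableDensityTerms]
  | succ k ih => rw [Function.iterate_succ_apply']; exact ih.derivTerms

end PoissonHermite

open PoissonHermite

instance sFinite_gaussMeasure (d : ℕ) : SFinite (gaussMeasure d) := by
  unfold gaussMeasure
  infer_instance

lemma aestronglyMeasurable_OU {d : ℕ} {f : EuclideanSpace ℝ (Fin d) → ℝ}
    (hf : AEStronglyMeasurable f (gaussMeasure d)) (x : EuclideanSpace ℝ (Fin d)) :
    AEStronglyMeasurable (fun s => OU d s f x) (volume.restrict (Ioi 0)) := by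
  have hinner : Measurable fun p : ℝ × EuclideanSpace ℝ (Fin d) => (inner ℝ x p.2 : ℝ) :=
    (continuous_const.inner continuous_snd).measurable
  refine (Measurable.aestronglyMeasurable (by fun_prop)).mul
    (AEStronglyMeasurable.integral_prod_right' (f := fun p : ℝ × EuclideanSpace ℝ (Fin d) =>
      Real.exp (-(Real.exp (-2 * p.1) * (‖x‖ ^ 2 + ‖p.2‖ ^ 2) -
        2 * Real.exp (-p.1) * (inner ℝ x p.2 : ℝ)) / (1 - Real.exp (-2 * p.1))) * f p.2) ?_)
  exact (Measurable.aestronglyMeasurable (by fun_prop)).mul hf.comp_snd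

lemma abs_OU_le_toReal_OUstar {d : ℕ} {f : EuclideanSpace ℝ (Fin d) → ℝ}
    {x : EuclideanSpace ℝ (Fin d)} (hx : OUstar d f x ≠ ⊤) {s : ℝ} (hs : s ∈ Ioi 0) :
    |OU d s f x| ≤ (OUstar d f x).toReal :=
  (ENNReal.ofReal_le_iff_le_toReal hx).1 <|
    le_iSup₂ (f := fun s (_ : s ∈ Ioi (0 : ℝ)) => ENNReal.ofReal |OU d s f x|) s hs

lemma dPH_eq_integral {d : ℕ} (k : ℕ) {f : EuclideanSpace ℝ (Fin d) → ℝ}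
    (hf : AEStronglyMeasurable f (gaussMeasure d)) {x : EuclideanSpace ℝ (Fin d)}
    (hx : OUstar d f x ≠ ⊤) {t : ℝ} (ht : 0 < t) :
    dPH d k f t x =
      ∫ s in Ioi 0, OU d s f x * evalTerms (derivTerms^[k] stableDensityTerms) t s := by
  simp only [dPH, PH, gStable_eq_evalTerms]
  exact iteratedDeriv_integral_mul_evalTerms (fun s hs => abs_OU_le_toReal_OUstar hx hs)
    (aestronglyMeasurable_OU hf x) _ k ht

lemma abs_dPH_le {d : ℕ} (k : ℕ) {f : EuclideanSpace ℝ (Fin d) → ℝ}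
    (hf : AEStronglyMeasurable f (gaussMeasure d)) {x : EuclideanSpace ℝ (Fin d)}
    (hx : OUstar d f x ≠ ⊤) {t : ℝ} (ht : 0 < t) :
    |dPH d k f t x| ≤ (OUstar d f x).toReal *
      (∫ u in Ioi 0, |evalTerms (derivTerms^[k] stableDensityTerms) 1 u|) * (t ^ k)⁻¹ := by
  rw [dPH_eq_integral k hf hx ht]
  exact abs_integral_mul_evalTerms_le (fun s hs => abs_OU_le_toReal_OUstar hx hs)
    (isHomogeneous_iterate_derivTerms_stableDensityTerms k) ht

theorem stmt_3_general (d : ℕ) (k : ℕ) :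
    ∃ C : ℝ, 0 < C ∧ ∀ f : EuclideanSpace ℝ (Fin d) → ℝ, Integrable f (gaussMeasure d) →
      ∀ x : EuclideanSpace ℝ (Fin d), ∀ t : ℝ, 0 < t →
        ENNReal.ofReal |dPH d k f t x| ≤
          ENNReal.ofReal C * OUstar d f x * ENNReal.ofReal (t ^ k)⁻¹ := by
  set C₀ := ∫ u in Ioi 0, |evalTerms (derivTerms^[k] stableDensityTerms) 1 u|
  have hC₀ : 0 ≤ C₀ := setIntegral_nonneg measurableSet_Ioi fun _ _ => abs_nonneg _
  refine ⟨C₀ + 1, by positivity, fun f hf x t ht => ?_⟩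
  by_cases hx : OUstar d f x = ⊤
  · rw [hx, ENNReal.mul_top (by positivity), ENNReal.top_mul (by positivity)]
    exact le_top
  calc ENNReal.ofReal |dPH d k f t x|
      ≤ ENNReal.ofReal ((C₀ + 1) * (OUstar d f x).toReal * (t ^ k)⁻¹) := by
        refine ENNReal.ofReal_le_ofReal ((abs_dPH_le k hf.aestronglyMeasurable hx ht).trans ?_)
        rw [mul_comm (C₀ + 1)]
        gcongr
        linarith
    _ = ENNReal.ofReal (C₀ + 1) * OUstar d f x * ENNReal.ofReal (t ^ k)⁻¹ := by
        rw [ENNReal.ofReal_mul (by positivity), ENNReal.ofReal_mul (by positivity),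
          ENNReal.ofReal_toReal hx]

/-- For every `k ≥ 1` there is `C_k > 0` such that for every `f ∈ L¹(γ_d)`,
every `x ∈ ℝ^d` and every `t > 0`, `|∂^k/∂t^k P_t f(x)| ≤ C_k T* f(x) t^{−k}`. -/
theorem stmt_3 (d : ℕ) (k : ℕ) (hk : 1 ≤ k) :
    ∃ C : ℝ, 0 < C ∧ ∀ f : EuclideanSpace ℝ (Fin d) → ℝ, Integrable f (gaussMeasure d) →
      ∀ x : EuclideanSpace ℝ (Fin d), ∀ t : ℝ, 0 < t →
        ENNReal.ofReal |dPH d k f t x| ≤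
          ENNReal.ofReal C * OUstar d f x * ENNReal.ofReal (t ^ k)⁻¹ :=
  stmt_3_general d k
end
end
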